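/- arXiv:1312.4317 — 8 statements merged into one kernel-verified Lean document; each statement's English description precedes it below -/
import Mathlib

section
/- On a one-element type, the always-true ternary relation satisfies Huntington's axioms A, B, C, and 9 but falsifies axiom D; hence axiom D is independent of the other four axioms. -/
theorem stmt1 :
    ∃ (B : PUnit → PUnit → PUnit → Prop),
      (∀ a b c, B a b c) ∧
      (∀ a b c : PUnit, B a b c → B c b a) ∧ (∀ a b c : PUnit, a ≠ b → a ≠ c → b ≠ c → (B b a c ∨ B c a b ∨ B a b c ∨ B c b a ∨ B a c b ∨ B b c a)) ∧ (∀ a x y : PUnit, a ≠ x → a ≠ y → x ≠ y → ¬(B a x y ∧ B a y x)) ∧ (∀ a b c x : PUnit, B a b c → a ≠ b → a ≠ c → a ≠ x → b ≠ c → b ≠ x → c ≠ x → (B a b x ∨ B x b c)) ∧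
      (∃ a b c : PUnit, B a b c ∧ ¬(a ≠ b ∧ a ≠ c ∧ b ≠ c)) := by
  refine ⟨fun _ _ _ => True, fun _ _ _ => trivial, fun _ _ _ _ => trivial,
    fun a b c hab _ _ => (hab rfl).elim,
    fun a x y hax _ _ => (hax rfl).elim,
    fun _ _ _ _ _ _ _ _ _ _ _ => Or.inl trivial,
    ⟨PUnit.unit, PUnit.unit, PUnit.unit, trivial, fun h => h.1 rfl⟩⟩
end

section
/- On the three-element type {1,2,3}, the relation whose only true instances are B 1 2 3, B 1 3 2, B 2 3 1, B 3 2 1 satisfies Huntington's axioms A, B, D, and 9 but falsifies axiom C. -/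
def B2 : Fin 3 → Fin 3 → Fin 3 → Prop := fun a b c =>
  (a, b, c) = (0, 1, 2) ∨ (a, b, c) = (0, 2, 1) ∨ (a, b, c) = (1, 2, 0) ∨ (a, b, c) = (2, 1, 0)

instance : DecidablePred (fun t : Fin 3 × Fin 3 × Fin 3 => B2 t.1 t.2.1 t.2.2) := by
  unfold B2; infer_instance

instance (a b c : Fin 3) : Decidable (B2 a b c) := by unfold B2; infer_instance

theorem stmt2 :
    (∀ a b c : Fin 3, B2 a b c → B2 c b a) ∧ (∀ a b c : Fin 3, a ≠ b → a ≠ c → b ≠ c → (B2 b a c ∨ B2 c a b ∨ B2 a b c ∨ B2 c b a ∨ B2 a c b ∨ B2 b c a)) ∧ (∀ a b c : Fin 3, B2 a b c → a ≠ b ∧ a ≠ c ∧ b ≠ c) ∧ (∀ a b c x : Fin 3, B2 a b c → a ≠ b → a ≠ c → a ≠ x → b ≠ c → b ≠ x → c ≠ x → (B2 a b x ∨ B2 x b c)) ∧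
    (∃ a x y : Fin 3, a ≠ x ∧ a ≠ y ∧ x ≠ y ∧ B2 a x y ∧ B2 a y x) := by
  refine ⟨by decide, by decide, by decide, by decide, 0, 1, 2, by decide, by decide, by decide, by decide, by decide⟩
end

section
/- On a two-element type {1,2}, the relation whose only true instances are B 1 1 1 and B 1 2 2 satisfies Huntington's axioms B, C, and 9 while falsifying axioms A and D. -/
def B4 : Fin 2 → Fin 2 → Fin 2 → Prop := fun a b c =>
  (a, b, c) = (0, 0, 0) ∨ (a, b, c) = (0, 1, 1)

theorem stmt4 :
    (∀ a b c : Fin 2, a ≠ b → a ≠ c → b ≠ c → (B4 b a c ∨ B4 c a b ∨ B4 a b c ∨ B4 c b a ∨ B4 a c b ∨ B4 b c a)) ∧ (∀ a x y : Fin 2, a ≠ x → a ≠ y → x ≠ y → ¬(B4 a x y ∧ B4 a y x)) ∧ (∀ a b c x : Fin 2, B4 a b c → a ≠ b → a ≠ c → a ≠ x → b ≠ c → b ≠ x → c ≠ x → (B4 a b x ∨ B4 x b c)) ∧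
    (∃ a b c : Fin 2, B4 a b c ∧ ¬ B4 c b a) ∧
    (∃ a b c : Fin 2, B4 a b c ∧ ¬(a ≠ b ∧ a ≠ c ∧ b ≠ c)) := by
  refine ⟨?_, ?_, ?_, ⟨0,1,1, by simp [B4], by simp [B4]⟩, ⟨0,0,0, by simp [B4], by simp⟩⟩ <;>
    · unfold B4; decide
end

section
/- There is a one-element structure satisfying Huntington's axioms A, B, C, 9 together with a true betweenness statement; hence, in contrast to the full system H, the system H' = {A, B, C, 9} admits a one-element model with nonempty betweenness. -/
theorem stmt6 :
    ∃ (B : PUnit → PUnit → PUnit → Prop),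
      (∀ a b c : PUnit, B a b c → B c b a) ∧ (∀ a b c : PUnit, a ≠ b → a ≠ c → b ≠ c → (B b a c ∨ B c a b ∨ B a b c ∨ B c b a ∨ B a c b ∨ B b c a)) ∧ (∀ a x y : PUnit, a ≠ x → a ≠ y → x ≠ y → ¬(B a x y ∧ B a y x)) ∧ (∀ a b c x : PUnit, B a b c → a ≠ b → a ≠ c → a ≠ x → b ≠ c → b ≠ x → c ≠ x → (B a b x ∨ B x b c)) ∧
      (∃ a b c : PUnit, B a b c) := by
  exact ⟨fun _ _ _ => True, fun _ _ _ _ => trivial,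
    fun a b _ h _ _ => absurd rfl h,
    fun a x _ h _ _ _ => absurd rfl h,
    fun a b _ _ _ h _ _ _ _ => absurd rfl h,
    ⟨.unit, .unit, .unit, trivial⟩⟩
end

section
/- If a strict betweenness relation B satisfies Huntington's axioms A, B, C, D, 9 and β is defined by β x y z ↔ (B x y z ∨ x = y ∨ x = z ∨ y = z), then β satisfies McPhee's axiom M5: for all a b c, β a b c ∨ β b c a ∨ β b a c. -/
theorem stmt8 {P : Type*} (B : P → P → P → Prop)
    (hA : (∀ a b c : P, B a b c → B c b a)) (hB : (∀ a b c : P, a ≠ b → a ≠ c → b ≠ c → (B b a c ∨ B c a b ∨ B a b c ∨ B c b a ∨ B a c b ∨ B b c a))) (hC : (∀ a x y : P, a ≠ x → a ≠ y → x ≠ y → ¬(B a x y ∧ B a y x)))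
    (hD : (∀ a b c : P, B a b c → a ≠ b ∧ a ≠ c ∧ b ≠ c)) (h9 : (∀ a b c x : P, B a b c → a ≠ b → a ≠ c → a ≠ x → b ≠ c → b ≠ x → c ≠ x → (B a b x ∨ B x b c)))
    (β : P → P → P → Prop)
    (hβ : ∀ x y z, β x y z ↔ (B x y z ∨ x = y ∨ x = z ∨ y = z)) :
    ∀ a b c : P, β a b c ∨ β b c a ∨ β b a c := by
  intro a b c
  simp only [hβ]
  by_cases hab : a = b; · tauto
  by_cases hac : a = c; · tauto
  by_cases hbc : b = c; · tauto
  rcases hB a b c hab hac hbc with h|h|h|h|h|h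
  · exact Or.inr (Or.inr (Or.inl h))
  · exact Or.inr (Or.inr (Or.inl (hA _ _ _ h)))
  · exact Or.inl (Or.inl h)
  · exact Or.inl (Or.inl (hA _ _ _ h))
  · exact Or.inr (Or.inl (Or.inl (hA _ _ _ h)))
  · exact Or.inr (Or.inl (Or.inl h))
end

section
/- If a weak betweenness relation β on a type P satisfies McPhee's axioms M3, M4, M5, and the strict relation B is defined by B x y z ↔ (β x y z ∧ x ≠ y ∧ x ≠ z ∧ y ≠ z), then B satisfies all five of Huntington's axioms A, B, C, D, 9. -/
theorem stmt13 {P : Type*} (β : P → P → P → Prop)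
    (hM3 : (∀ a b c d : P, β b a c ∧ β d b a → β c a d ∨ a = b)) (hM4 : (∀ a b c d : P, β b a c ∧ β c a d ∧ β d a b → a = b ∨ a = c ∨ a = d)) (hM5 : (∀ a b c : P, β a b c ∨ β b c a ∨ β b a c))
    (B : P → P → P → Prop)
    (hB : ∀ x y z, B x y z ↔ (β x y z ∧ x ≠ y ∧ x ≠ z ∧ y ≠ z)) :
    (∀ a b c : P, B a b c → B c b a) ∧ (∀ a b c : P, a ≠ b → a ≠ c → b ≠ c → (B b a c ∨ B c a b ∨ B a b c ∨ B c b a ∨ B a c b ∨ B b c a)) ∧ (∀ a x y : P, a ≠ x → a ≠ y → x ≠ y → ¬(B a x y ∧ B a y x)) ∧ (∀ a b c : P, B a b c → a ≠ b ∧ a ≠ c ∧ b ≠ c) ∧ (∀ a b c x : P, B a b c → a ≠ b → a ≠ c → a ≠ x → b ≠ c → b ≠ x → c ≠ x → (B a b x ∨ B x b c)) := by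
  have hmid : ∀ x y : P, β x y x → y = x := by
    intro x y h
    rcases hM4 y x x x ⟨h, h, h⟩ with h' | h' | h' <;> exact h'
  have hrefl : ∀ a b : P, β a a b := by
    intro a b
    rcases hM5 a a b with h | h | h
    · exact h
    · rw [hmid a b h]
      rcases hM5 a a a with h | h | h <;> exact h
    · exact h
  have hsym : ∀ a b c : P, a ≠ b → β a b c → β c b a := by
    intro a b c hab h
    rcases hM3 b a c a ⟨h, hrefl a b⟩ with h' | h'
    · exact h'
    · exact absurd h'.symm hab
  have hC : ∀ a x y : P, a ≠ x → a ≠ y → x ≠ y → β a x y → β a y x → False := by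
    intro a x y hax hay hxy h1 h2
    have h3 : β x y a := hsym a y x hay h2
    rcases hM3 y x a a ⟨h3, h1⟩ with h' | h'
    · exact hay (hmid a y h').symm
    · exact hxy h'.symm
  have h9 : ∀ a b c x : P, β a b c → a ≠ b → a ≠ c → a ≠ x → b ≠ c → b ≠ x → c ≠ x →
      β a b x ∨ β x b c := by
    intro a b c x h1 hab hac hax hbc hbx hcx
    by_contra hcon
    push_neg at hcon
    obtain ⟨n1, n2⟩ := hcon
    have n3 : ¬ β x b a := fun h => n1 (hsym x b a hbx.symm h)
    have n4 : ¬ β c b x := fun h => n2 (hsym c b x hbc.symm h)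
    have h2 : β c b a := hsym a b c hab h1
    have key1 : β a x b ∨ β x a b := by
      rcases hM5 b x a with h | h | h
      · exact Or.inl (hsym b x a hbx h)
      · exact Or.inr h
      · exact absurd h n3
    have key2 : β c x b ∨ β x c b := by
      rcases hM5 b x c with h | h | h
      · exact Or.inl (hsym b x c hbx h)
      · exact Or.inr h
      · exact absurd h n2
    rcases key1 with k1 | k1
    · -- k1 : β a x b, i.e. x between a and b
      rcases key2 with k2 | k2
      · -- k2 : β c x b : x between c and b
        have hbxc : β b x c := hsym c x b hcx k2
        have hbxa : β b x a := hsym a x b hax k1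
        rcases hM5 a x c with h | h | h
        · -- β a x c
          have hcxa : β c x a := hsym a x c hax h
          rcases hM4 x a b c ⟨k1, hbxc, hcxa⟩ with h' | h' | h'
          · exact hax h'.symm
          · exact hbx h'.symm
          · exact hcx h'.symm
        · -- β x c a
          rcases hM3 c x a b ⟨h, hbxc⟩ with h' | h'
          · exact hC a b c hab hac hbc h1 h'
          · exact hcx h'
        · -- β x a c
          rcases hM3 a x c b ⟨h, hbxa⟩ with h' | h'
          · exact hC c b a hbc.symm hac.symm hab.symm h2 h'
          · exact hax h'
      · -- k2 : β x c b
        rcases hM3 b c a x ⟨h2, k2⟩ with h' | h'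
        · exact n1 h'
        · exact hbc h'
    · -- k1 : β x a b
      rcases hM3 b a c x ⟨h1, k1⟩ with h' | h'
      · exact n4 h'
      · exact hab h'.symm
  refine ⟨?_, ?_, ?_, ?_, ?_⟩
  · intro a b c h
    rw [hB] at h ⊢
    obtain ⟨hβ, hab, hac, hbc⟩ := h
    exact ⟨hsym a b c hab hβ, hbc.symm, hac.symm, hab.symm⟩
  · intro a b c hab hac hbc
    rcases hM5 a b c with h | h | h
    · exact Or.inr (Or.inr (Or.inl ((hB a b c).2 ⟨h, hab, hac, hbc⟩)))
    · exact Or.inr (Or.inr (Or.inr (Or.inr (Or.inr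
        ((hB b c a).2 ⟨h, hbc, hab.symm, hac.symm⟩)))))
    · exact Or.inl ((hB b a c).2 ⟨h, hab.symm, hbc, hac⟩)
  · rintro a x y hax hay hxy ⟨h1, h2⟩
    rw [hB] at h1 h2
    exact hC a x y hax hay hxy h1.1 h2.1
  · intro a b c h
    rw [hB] at h
    exact ⟨h.2.1, h.2.2.1, h.2.2.2⟩
  · intro a b c x h hab hac hax hbc hbx hcx
    rw [hB] at h
    rcases h9 a b c x h.1 hab hac hax hbc hbx hcx with h' | h'
    · exact Or.inl ((hB a b x).2 ⟨h', hab, hax, hbx⟩)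
    · exact Or.inr ((hB x b c).2 ⟨h', hbx.symm, hcx.symm, hbc⟩)
end

section
/- Every structure (P, β) satisfying McPhee's system M2 = {M3, M4, M5} also satisfies McPhee's axioms M6 and M2': β b a c ∧ β c d a → β d a b. In particular, M2 entails part of system M3 = {M2', M6, M7}. -/
theorem stmt16 {P : Type*} (β : P → P → P → Prop)
    (hM3 : (∀ a b c d : P, β b a c ∧ β d b a → β c a d ∨ a = b)) (hM4 : (∀ a b c d : P, β b a c ∧ β c a d ∧ β d a b → a = b ∨ a = c ∨ a = d)) (hM5 : (∀ a b c : P, β a b c ∨ β b c a ∨ β b a c)) :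
    (∀ a b c : P, β a b c ∨ β a c b ∨ β b c a ∨ β b a c ∨ β c a b ∨ β c b a) ∧ (∀ a b c d : P, β b a c ∧ β c d a → β d a b) := by
  have mid : ∀ x y : P, β x y x → y = x := by
    intro x y h
    rcases hM4 y x x x ⟨h, h, h⟩ with h' | h' | h' <;> exact h'
  have bself : ∀ x : P, β x x x := by
    intro x
    rcases hM5 x x x with h | h | h <;> exact h
  have sym : ∀ b a c : P, β b a c → β c a b := by
    intro b a c h
    by_cases hab : a = b
    · subst hab
      rcases hM5 a c a with h' | h' | h'
      · have hc := mid a c h'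
        rw [hc] at h ⊢
        exact bself a
      · exact h'
      · exact h'
    · rcases hM5 b b a with h1 | h1 | h1
      · rcases hM3 a b c b ⟨h, h1⟩ with h2 | h2
        · exact h2
        · exact absurd h2 hab
      · exact absurd (mid b a h1) hab
      · rcases hM3 a b c b ⟨h, h1⟩ with h2 | h2
        · exact h2
        · exact absurd h2 hab
  have triv1 : ∀ x y : P, β x y y := by
    intro x y
    rcases hM5 x y y with h | h | h
    · exact h
    · exact sym y y x h
    · have hxy := mid y x h
      rw [hxy]
      exact bself y
  have triv2 : ∀ x y : P, β y y x := fun x y => sym x y y (triv1 x y)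
  have key2 : ∀ a b c : P, β b a c → β c b a → a = b := by
    intro a b c h1 h2
    rcases hM3 a b c c ⟨h1, h2⟩ with h | h
    · have hac := mid c a h
      rw [hac] at h2
      have := mid c b h2
      rw [hac, this]
    · exact h
  constructor
  · intro a b c
    rcases hM5 a b c with h | h | h
    · exact Or.inl h
    · exact Or.inr (Or.inr (Or.inl h))
    · exact Or.inr (Or.inr (Or.inr (Or.inl h)))
  · intro a b c d ⟨h1, h2⟩
    rcases hM5 d a b with hY | hY | hY
    · exact hY
    · -- hY : β a b d
      have hdba := sym a b d hY
      rcases hM3 a b c d ⟨h1, hdba⟩ with hcad | hab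
      · -- β c a d, with h2 : β c d a, derive a = d
        have hdac := sym c a d hcad
        have had : a = d := key2 a d c hdac h2
        rw [← had]
        exact triv2 b a
      · rw [← hab]
        exact triv1 d a
    · -- hY : β a d b
      rcases hM5 b d c with hZ | hZ | hZ
      · -- β b d c : use M4 with middle d
        rcases hM4 d c a b ⟨h2, hY, hZ⟩ with hdc | hda | hdb
        · rw [← hdc] at h1
          exact sym b a d h1
        · rw [← hda]
          exact triv2 b d
        · rw [hdb] at h2 ⊢
          have hab := key2 a b c h1 h2
          rw [← hab]
          exact bself a
      · -- hZ : β d c b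
        have hadc := sym c d a h2
        rcases hM3 c d b a ⟨hZ, hadc⟩ with hbca | hcd
        · have hcab := sym b a c h1
          have hac := key2 a c b hcab hbca
          rw [hac] at h2
          have hdc := mid c d h2
          rw [hdc, hac]
          exact triv2 b c
        · rw [hcd] at h1
          exact sym b a d h1
      · -- hZ : β d b c
        rcases hM3 b d c a ⟨hZ, hY⟩ with hcba | hbd
        · have hab := key2 a b c h1 hcba
          rw [← hab]
          exact triv1 d a
        · rw [← hbd] at h2
          have hab := key2 a b c h1 h2
          rw [← hbd, ← hab]
          exact bself a
end

section
/- Every structure (P, β) satisfying McPhee's axioms M3, M4, M5 also satisfies M7: β c a d ∧ β c b d ∧ β a c b ∧ β a d b → a = c ∨ b = c ∨ a = d ∨ b = d. -/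
theorem stmt17 {P : Type*} (β : P → P → P → Prop)
    (hM3 : (∀ a b c d : P, β b a c ∧ β d b a → β c a d ∨ a = b)) (hM4 : (∀ a b c d : P, β b a c ∧ β c a d ∧ β d a b → a = b ∨ a = c ∨ a = d)) (hM5 : (∀ a b c : P, β a b c ∨ β b c a ∨ β b a c)) :
    (∀ a b c d : P, β c a d ∧ β c b d ∧ β a c b ∧ β a d b → a = c ∨ b = c ∨ a = d ∨ b = d) := by
  intro a b c d ⟨h1, h2, h3, h4⟩
  -- if c = d then b = d (hence b = c)
  have hcd : c = d → a = c ∨ b = c ∨ a = d ∨ b = d := by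
    intro h; subst h
    -- h2 : β c b c
    rcases hM4 b c c c ⟨h2, h2, h2⟩ with h | h | h <;> exact Or.inr (Or.inl h)
  -- main argument assuming β a a c and β a a d
  have main : β a a c → β a a d → a = c ∨ b = c ∨ a = d ∨ b = d := by
    intro haac haad
    rcases hM3 c a b a ⟨h3, haac⟩ with hbca | h
    · rcases hM3 d a b a ⟨h4, haad⟩ with hbda | h
      · rcases hM3 d b a c ⟨hbda, h2⟩ with hadc | h
        · rcases hM5 c d b with hcdb | hdbc | hdcb
          · rcases hM4 d c b a ⟨hcdb, hbda, hadc⟩ with h | h | h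
            · exact hcd h.symm
            · exact Or.inr (Or.inr (Or.inr h.symm))
            · exact Or.inr (Or.inr (Or.inl h.symm))
          · rcases hM3 c b a d ⟨hbca, hdbc⟩ with hacd | h
            · rcases hM3 d a c a ⟨hadc, haad⟩ with hcda | h
              · rcases hM3 d c a a ⟨hcda, hacd⟩ with hada | h
                · rcases hM4 d a a a ⟨hada, hada, hada⟩ with h | h | h <;>
                    exact Or.inr (Or.inr (Or.inl h.symm))
                · exact hcd h.symm
              · exact Or.inr (Or.inr (Or.inl h.symm))
            · exact Or.inr (Or.inl h.symm)
          · rcases hM3 b c d d ⟨h2, hdcb⟩ with hdbd | h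
            · rcases hM4 b d d d ⟨hdbd, hdbd, hdbd⟩ with h | h | h <;>
                exact Or.inr (Or.inr (Or.inr h))
            · exact Or.inr (Or.inl h)
        · exact Or.inr (Or.inr (Or.inr h.symm))
      · exact Or.inr (Or.inr (Or.inl h.symm))
    · exact Or.inl h.symm
  have hac : β a c a → a = c ∨ b = c ∨ a = d ∨ b = d := by
    intro haca
    rcases hM4 c a a a ⟨haca, haca, haca⟩ with h | h | h <;> exact Or.inl h.symm
  have had : β a d a → a = c ∨ b = c ∨ a = d ∨ b = d := by
    intro hada
    rcases hM4 d a a a ⟨hada, hada, hada⟩ with h | h | h <;>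
      exact Or.inr (Or.inr (Or.inl h.symm))
  rcases hM5 a a c with haac | haca | haac
  · rcases hM5 a a d with haad | hada | haad
    · exact main haac haad
    · exact had hada
    · exact main haac haad
  · exact hac haca
  · rcases hM5 a a d with haad | hada | haad
    · exact main haac haad
    · exact had hada
    · exact main haac haad
end
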